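/- Let H be a Hopf algebra over a field k. The set of right ideal coideals of H, ordered by inclusion, is a complete lattice; equivalently, the poset of generalised quotients Quot_gen(H) = { H/I : I a right ideal coideal } with the quotient order is a complete lattice. -/

import Mathlib

open TensorProduct

variable {k H : Type*} [Field k] [Ring H] [HopfAlgebra k H]

/-- A right ideal coideal of a Hopf algebra `H`: a subspace `I` which is a right
ideal (`IH ⊆ I`) and a coideal (`Δ(I) ⊆ I ⊗ H + H ⊗ I`, `ε(I) = 0`). -/
def IsRightIdealCoideal (I : Submodule k H) : Prop :=
  (∀ x ∈ I, ∀ h : H, x * h ∈ I) ∧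
  (∀ x ∈ I, Coalgebra.comul (R := k) x ∈
      LinearMap.range (LinearMap.rTensor H I.subtype) ⊔
        LinearMap.range (LinearMap.lTensor H I.subtype)) ∧
  ∀ x ∈ I, Coalgebra.counit (R := k) x = 0

lemma range_mono_aux {I J : Submodule k H} (h : J ≤ I) :
    LinearMap.range (LinearMap.rTensor H J.subtype) ⊔
      LinearMap.range (LinearMap.lTensor H J.subtype) ≤
    LinearMap.range (LinearMap.rTensor H I.subtype) ⊔
      LinearMap.range (LinearMap.lTensor H I.subtype) := by
  have hJ : J.subtype = I.subtype.comp (Submodule.inclusion h) := by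
    ext x; rfl
  apply sup_le_sup
  · rw [hJ, LinearMap.rTensor_comp]
    exact LinearMap.range_comp_le_range _ _
  · rw [hJ, LinearMap.lTensor_comp]
    exact LinearMap.range_comp_le_range _ _

lemma sSup_isRightIdealCoideal (S : Set (Submodule k H))
    (hS : ∀ I ∈ S, IsRightIdealCoideal I) : IsRightIdealCoideal (sSup S) := by
  refine ⟨?_, ?_, ?_⟩
  · intro x hx h
    rw [sSup_eq_iSup'] at hx ⊢
    refine Submodule.iSup_induction (motive := fun x => ∀ h : H, x * h ∈ ⨆ I : S, (I : Submodule k H))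
      _ hx ?_ ?_ ?_ h
    · intro I y hy h
      exact le_iSup (fun I : S => (I : Submodule k H)) I ((hS I I.2).1 y hy h)
    · intro h; simp
    · intro a b ha hb h
      rw [add_mul]
      exact add_mem (ha h) (hb h)
  · intro x hx
    rw [sSup_eq_iSup'] at hx
    refine Submodule.iSup_induction (motive := fun x => Coalgebra.comul (R := k) x ∈
        LinearMap.range (LinearMap.rTensor H (sSup S).subtype) ⊔
          LinearMap.range (LinearMap.lTensor H (sSup S).subtype)) _ hx ?_ ?_ ?_
    · intro I y hy
      exact range_mono_aux (le_sSup I.2) ((hS I I.2).2.1 y hy)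
    · simp
    · intro a b ha hb
      rw [map_add]
      exact add_mem ha hb
  · intro x hx
    rw [sSup_eq_iSup'] at hx
    refine Submodule.iSup_induction (motive := fun x => Coalgebra.counit (R := k) x = 0)
      _ hx ?_ ?_ ?_
    · intro I y hy
      exact (hS I I.2).2.2 y hy
    · simp
    · intro a b ha hb
      rw [map_add, ha, hb, add_zero]

/-- The right ideal coideals of a Hopf algebra over a field, ordered by inclusion,
form a complete lattice: they are closed under arbitrary suprema, and every subset
of the poset of right ideal coideals has a least upper bound and a greatest lower
bound.  Equivalently (by reversing the order) the poset of generalised quotients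
`Quot_gen(H)` is a complete lattice. -/
theorem rightIdealCoideal_complete_lattice :
    (∀ S : Set (Submodule k H), (∀ I ∈ S, IsRightIdealCoideal I) →
      IsRightIdealCoideal (sSup S)) ∧
    (∀ S : Set {I : Submodule k H // IsRightIdealCoideal I},
      (∃ a, IsLUB S a) ∧ (∃ b, IsGLB S b)) := by
  refine ⟨sSup_isRightIdealCoideal, fun S => ⟨?_, ?_⟩⟩
  · refine ⟨⟨sSup (Subtype.val '' S), sSup_isRightIdealCoideal _ ?_⟩, ?_, ?_⟩
    · rintro I ⟨J, hJ, rfl⟩; exact J.2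
    · intro I hI
      show (I : Submodule k H) ≤ sSup (Subtype.val '' S)
      exact le_sSup (Set.mem_image_of_mem _ hI)
    · intro b hb
      show sSup (Subtype.val '' S) ≤ (b : Submodule k H)
      refine sSup_le ?_
      rintro J ⟨J', hJ', rfl⟩
      exact hb hJ'
  · set L : Set (Submodule k H) :=
      {J : Submodule k H | IsRightIdealCoideal J ∧ ∀ I ∈ S, J ≤ (I : Submodule k H)} with hL
    refine ⟨⟨sSup L, sSup_isRightIdealCoideal _ fun J hJ => hJ.1⟩, ?_, ?_⟩
    · intro I hI
      show sSup L ≤ (I : Submodule k H)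
      exact sSup_le fun J hJ => hJ.2 I hI
    · intro c hc
      show (c : Submodule k H) ≤ sSup L
      exact le_sSup ⟨c.2, fun I hI => hc hI⟩
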